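/- Let γ ∈ (0,1), b > 0, and w : [0,τ] → [0,∞) continuous with w(t) ≤ a + b ∫_0^t (t-s)^{γ-1} w(s) ds for all t ∈ [0,τ] and some a ≥ 0. Then there exists a constant K = K(b, γ, τ) such that w(t) ≤ a·K for all t ∈ [0,τ]. -/
import Mathlib


open Real intervalIntegral

set_option maxHeartbeats 1000000

theorem stmt_17 (b γ τ : ℝ) (hb : 0 < b) (hγ : γ ∈ Set.Ioo (0 : ℝ) 1) (hτ : 0 < τ) :
    ∃ K : ℝ, ∀ a : ℝ, 0 ≤ a → ∀ w : ℝ → ℝ,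
      ContinuousOn w (Set.Icc 0 τ) →
      (∀ t ∈ Set.Icc (0 : ℝ) τ, 0 ≤ w t) →
      (∀ t ∈ Set.Icc (0 : ℝ) τ,
        w t ≤ a + b * ∫ s in (0 : ℝ)..t, (t - s) ^ (γ - 1) * w s) →
      ∀ t ∈ Set.Icc (0 : ℝ) τ, w t ≤ a * K := by
  obtain ⟨hγ0, hγ1⟩ := hγ
  have hΓpos : 0 < Real.Gamma γ := Real.Gamma_pos_of_pos hγ0
  have h2bΓ : 0 < 2 * b * Real.Gamma γ := by positivity
  set Λ : ℝ := (2 * b * Real.Gamma γ) ^ (1 / γ) with hΛdef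
  have hΛpos : 0 < Λ := Real.rpow_pos_of_pos h2bΓ _
  have hΛγ : Λ ^ γ = 2 * b * Real.Gamma γ := by
    rw [hΛdef, ← Real.rpow_mul h2bΓ.le, one_div, inv_mul_cancel₀ (ne_of_gt hγ0),
      Real.rpow_one]
  refine ⟨2 * Real.exp (Λ * τ), ?_⟩
  intro a ha w hw hwpos hwineq
  set v : ℝ → ℝ := fun t => Real.exp (-(Λ * t)) * w t with hvdef
  have hvcont : ContinuousOn v (Set.Icc 0 τ) :=
    (Continuous.continuousOn (by continuity)).mul hw
  obtain ⟨t₀, ht₀, hmax⟩ := isCompact_Icc.exists_isMaxOn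
    (Set.nonempty_Icc.mpr hτ.le) hvcont
  set N := v t₀ with hNdef
  have hmax' : ∀ t ∈ Set.Icc (0:ℝ) τ, v t ≤ N := fun t ht => hmax ht
  have hN0 : 0 ≤ N := mul_nonneg (Real.exp_pos _).le (hwpos t₀ ht₀)
  have h0t₀ : (0:ℝ) ≤ t₀ := ht₀.1
  -- integrability of the kernel
  have hirpow : IntervalIntegrable (fun u : ℝ => u ^ (γ - 1)) MeasureTheory.volume 0 t₀ :=
    intervalIntegral.intervalIntegrable_rpow' (by linarith)
  have hker : IntervalIntegrable (fun s => (t₀ - s) ^ (γ - 1)) MeasureTheory.volume 0 t₀ := by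
    simpa using (hirpow.comp_sub_left t₀).symm
  have hIcc_sub : Set.uIcc (0:ℝ) t₀ ⊆ Set.Icc 0 τ := by
    rw [Set.uIcc_of_le h0t₀]; exact Set.Icc_subset_Icc le_rfl ht₀.2
  have hint1 : IntervalIntegrable (fun s => (t₀ - s) ^ (γ - 1) * w s)
      MeasureTheory.volume 0 t₀ := hker.mul_continuousOn (hw.mono hIcc_sub)
  have hint2 : IntervalIntegrable
      (fun s => (t₀ - s) ^ (γ - 1) * (N * Real.exp (Λ * s)))
      MeasureTheory.volume 0 t₀ :=
    hker.mul_continuousOn (Continuous.continuousOn (by continuity))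
  have hwle : ∀ s ∈ Set.Icc (0:ℝ) t₀, w s ≤ N * Real.exp (Λ * s) := by
    intro s hs
    have hvs := hmax' s ⟨hs.1, hs.2.trans ht₀.2⟩
    have h := mul_le_mul_of_nonneg_right hvs (Real.exp_pos (Λ * s)).le
    calc w s = Real.exp (-(Λ * s)) * w s * Real.exp (Λ * s) := by
          rw [mul_comm (Real.exp (-(Λ * s))) (w s), mul_assoc, ← Real.exp_add]; simp
      _ ≤ N * Real.exp (Λ * s) := h
  have hmono : (∫ s in (0:ℝ)..t₀, (t₀ - s) ^ (γ - 1) * w s)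
      ≤ ∫ s in (0:ℝ)..t₀, (t₀ - s) ^ (γ - 1) * (N * Real.exp (Λ * s)) := by
    apply intervalIntegral.integral_mono_on h0t₀ hint1 hint2
    intro s hs
    have hts : (0:ℝ) ≤ t₀ - s := by linarith [hs.2]
    exact mul_le_mul_of_nonneg_left (hwle s hs) (Real.rpow_nonneg hts _)
  -- rewrite the weighted integral
  have hEJ : Real.exp (-(Λ * t₀)) *
      (∫ s in (0:ℝ)..t₀, (t₀ - s) ^ (γ - 1) * (N * Real.exp (Λ * s)))
      = N * ∫ u in (0:ℝ)..t₀, u ^ (γ - 1) * Real.exp (-(Λ * u)) := by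
    have hpt : ∀ s : ℝ, Real.exp (-(Λ * t₀)) *
        ((t₀ - s) ^ (γ - 1) * (N * Real.exp (Λ * s)))
        = N * ((fun u => u ^ (γ - 1) * Real.exp (-(Λ * u))) (t₀ - s)) := by
      intro s
      have he : Real.exp (-(Λ * (t₀ - s))) = Real.exp (-(Λ * t₀)) * Real.exp (Λ * s) := by
        rw [← Real.exp_add]; ring_nf
      simp only [he]; ring
    calc Real.exp (-(Λ * t₀)) * ∫ s in (0:ℝ)..t₀, (t₀ - s) ^ (γ - 1) * (N * Real.exp (Λ * s))
        = ∫ s in (0:ℝ)..t₀, Real.exp (-(Λ * t₀)) *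
            ((t₀ - s) ^ (γ - 1) * (N * Real.exp (Λ * s))) :=
          (intervalIntegral.integral_const_mul _ _).symm
      _ = ∫ s in (0:ℝ)..t₀, N * ((fun u => u ^ (γ - 1) * Real.exp (-(Λ * u))) (t₀ - s)) := by
          simp only [hpt]
      _ = N * ∫ s in (0:ℝ)..t₀, (fun u => u ^ (γ - 1) * Real.exp (-(Λ * u))) (t₀ - s) :=
          intervalIntegral.integral_const_mul _ _
      _ = N * ∫ u in (t₀ - t₀)..(t₀ - 0), u ^ (γ - 1) * Real.exp (-(Λ * u)) := by
          rw [intervalIntegral.integral_comp_sub_left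
            (fun u => u ^ (γ - 1) * Real.exp (-(Λ * u))) t₀]
      _ = N * ∫ u in (0:ℝ)..t₀, u ^ (γ - 1) * Real.exp (-(Λ * u)) := by
          rw [sub_self, sub_zero]
  -- estimate the remaining integral via the Gamma function
  have hI1 : (∫ u in (0:ℝ)..t₀, u ^ (γ - 1) * Real.exp (-(Λ * u)))
      = Λ ^ (1 - γ) * ∫ u in (0:ℝ)..t₀,
        (fun x => Real.exp (-x) * x ^ (γ - 1)) (Λ * u) := by
    rw [← intervalIntegral.integral_const_mul]
    apply intervalIntegral.integral_congr
    intro u hu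
    have hu0 : 0 ≤ u := by
      rw [Set.uIcc_of_le h0t₀] at hu; exact hu.1
    simp only
    rw [Real.mul_rpow hΛpos.le hu0]
    have hone : Λ ^ (1 - γ) * Λ ^ (γ - 1) = 1 := by
      rw [← Real.rpow_add hΛpos]; norm_num
    calc u ^ (γ - 1) * Real.exp (-(Λ * u))
        = (Λ ^ (1 - γ) * Λ ^ (γ - 1)) * (u ^ (γ - 1) * Real.exp (-(Λ * u))) := by
          rw [hone, one_mul]
      _ = Λ ^ (1 - γ) * (Real.exp (-(Λ * u)) * (Λ ^ (γ - 1) * u ^ (γ - 1))) := by ring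
  have hI2 : (∫ u in (0:ℝ)..t₀, (fun x => Real.exp (-x) * x ^ (γ - 1)) (Λ * u))
      = Λ⁻¹ * ∫ x in (0:ℝ)..(Λ * t₀), Real.exp (-x) * x ^ (γ - 1) := by
    rw [intervalIntegral.integral_comp_mul_left
      (fun x => Real.exp (-x) * x ^ (γ - 1)) (ne_of_gt hΛpos)]
    rw [mul_zero, smul_eq_mul]
  have hIg : (∫ x in (0:ℝ)..(Λ * t₀), Real.exp (-x) * x ^ (γ - 1)) ≤ Real.Gamma γ := by
    rw [Real.Gamma_eq_integral hγ0,
      intervalIntegral.integral_of_le (mul_nonneg hΛpos.le h0t₀)]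
    apply MeasureTheory.setIntegral_mono_set (Real.GammaIntegral_convergent hγ0)
    · filter_upwards [MeasureTheory.ae_restrict_mem measurableSet_Ioi] with x hx
      exact mul_nonneg (Real.exp_pos _).le (Real.rpow_nonneg hx.le _)
    · exact HasSubset.Subset.eventuallyLE Set.Ioc_subset_Ioi_self
  have hInn : (0:ℝ) ≤ ∫ x in (0:ℝ)..(Λ * t₀), Real.exp (-x) * x ^ (γ - 1) := by
    apply intervalIntegral.integral_nonneg (mul_nonneg hΛpos.le h0t₀)
    intro x hx
    exact mul_nonneg (Real.exp_pos _).le (Real.rpow_nonneg hx.1 _)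
  have hIbound : (∫ u in (0:ℝ)..t₀, u ^ (γ - 1) * Real.exp (-(Λ * u)))
      ≤ (Λ ^ γ)⁻¹ * Real.Gamma γ := by
    rw [hI1, hI2]
    have hpow : Λ ^ (1 - γ) * Λ⁻¹ = (Λ ^ γ)⁻¹ := by
      rw [← Real.rpow_neg_one Λ, ← Real.rpow_add hΛpos, ← Real.rpow_neg hΛpos.le]
      congr 1; ring
    calc Λ ^ (1 - γ) * (Λ⁻¹ * ∫ x in (0:ℝ)..(Λ * t₀), Real.exp (-x) * x ^ (γ - 1))
        = (Λ ^ (1 - γ) * Λ⁻¹) * ∫ x in (0:ℝ)..(Λ * t₀), Real.exp (-x) * x ^ (γ - 1) := by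
          ring
      _ ≤ (Λ ^ (1 - γ) * Λ⁻¹) * Real.Gamma γ := by
          apply mul_le_mul_of_nonneg_left hIg
          exact mul_nonneg (Real.rpow_nonneg hΛpos.le _) (inv_nonneg.mpr hΛpos.le)
      _ = (Λ ^ γ)⁻¹ * Real.Gamma γ := by rw [hpow]
  -- the key inequality N ≤ a + N/2
  have hE1 : Real.exp (-(Λ * t₀)) ≤ 1 :=
    Real.exp_le_one_iff.mpr (neg_nonpos.mpr (mul_nonneg hΛpos.le h0t₀))
  have key : N ≤ a + N / 2 := by
    have h1 : N ≤ Real.exp (-(Λ * t₀)) *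
        (a + b * ∫ s in (0:ℝ)..t₀, (t₀ - s) ^ (γ - 1) * w s) :=
      mul_le_mul_of_nonneg_left (hwineq t₀ ht₀) (Real.exp_pos _).le
    have h2 : Real.exp (-(Λ * t₀)) *
        (a + b * ∫ s in (0:ℝ)..t₀, (t₀ - s) ^ (γ - 1) * w s)
        ≤ a + b * (Real.exp (-(Λ * t₀)) *
          ∫ s in (0:ℝ)..t₀, (t₀ - s) ^ (γ - 1) * (N * Real.exp (Λ * s))) := by
      have ha' : Real.exp (-(Λ * t₀)) * a ≤ a :=
        mul_le_of_le_one_left ha hE1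
      have hmono' : Real.exp (-(Λ * t₀)) *
          (∫ s in (0:ℝ)..t₀, (t₀ - s) ^ (γ - 1) * w s)
          ≤ Real.exp (-(Λ * t₀)) *
          (∫ s in (0:ℝ)..t₀, (t₀ - s) ^ (γ - 1) * (N * Real.exp (Λ * s))) :=
        mul_le_mul_of_nonneg_left hmono (Real.exp_pos _).le
      calc Real.exp (-(Λ * t₀)) *
          (a + b * ∫ s in (0:ℝ)..t₀, (t₀ - s) ^ (γ - 1) * w s)
          = Real.exp (-(Λ * t₀)) * a + b * (Real.exp (-(Λ * t₀)) *
            ∫ s in (0:ℝ)..t₀, (t₀ - s) ^ (γ - 1) * w s) := by ring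
        _ ≤ a + b * (Real.exp (-(Λ * t₀)) *
            ∫ s in (0:ℝ)..t₀, (t₀ - s) ^ (γ - 1) * (N * Real.exp (Λ * s))) :=
          add_le_add ha' (mul_le_mul_of_nonneg_left hmono' hb.le)
    have h3 : b * (Real.exp (-(Λ * t₀)) *
        ∫ s in (0:ℝ)..t₀, (t₀ - s) ^ (γ - 1) * (N * Real.exp (Λ * s)))
        ≤ b * (N * ((Λ ^ γ)⁻¹ * Real.Gamma γ)) := by
      rw [hEJ]
      apply mul_le_mul_of_nonneg_left _ hb.le
      exact mul_le_mul_of_nonneg_left hIbound hN0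
    have h4 : b * (N * ((Λ ^ γ)⁻¹ * Real.Gamma γ)) = N / 2 := by
      rw [hΛγ]
      have hbne : (b:ℝ) ≠ 0 := ne_of_gt hb
      have hΓne : Real.Gamma γ ≠ 0 := ne_of_gt hΓpos
      field_simp
    linarith
  have hN2a : N ≤ 2 * a := by linarith
  intro t ht
  have hvt : v t ≤ N := hmax' t ht
  have hvt0 : 0 ≤ v t := mul_nonneg (Real.exp_pos _).le (hwpos t ht)
  have hwt : w t = Real.exp (Λ * t) * v t := by
    rw [hvdef]; simp only
    rw [← mul_assoc, ← Real.exp_add]; simp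
  rw [hwt]
  calc Real.exp (Λ * t) * v t ≤ Real.exp (Λ * t) * N :=
        mul_le_mul_of_nonneg_left hvt (Real.exp_pos _).le
    _ ≤ Real.exp (Λ * τ) * N := by
        apply mul_le_mul_of_nonneg_right _ hN0
        exact Real.exp_le_exp.mpr (mul_le_mul_of_nonneg_left ht.2 hΛpos.le)
    _ ≤ Real.exp (Λ * τ) * (2 * a) :=
        mul_le_mul_of_nonneg_left hN2a (Real.exp_pos _).le
    _ = a * (2 * Real.exp (Λ * τ)) := by ring
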